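/- arXiv:2103.05117 — 7 statements merged into one kernel-verified Lean document; each statement's English description precedes it below -/
import Mathlib

section
/- The removal modality distributes over disjunction in its first argument: for every model M and point s, M, s ⊨ ⟨-(φ₁ ∨ φ₂)⟩ψ if and only if M, s ⊨ ⟨-φ₁⟩ψ ∨ ⟨-φ₂⟩ψ. -/
inductive Form : Type where
  | atom : ℕ → Form
  | top : Form
  | neg : Form → Form
  | or : Form → Form → Form
  | dia : Form → Form
  | rem : Form → Form → Form

structure Model (W : Type) where
  R : W → W → Prop
  V : ℕ → W → Prop

/-- Truth relative to a current domain `D ⊆ W` (submodel semantics);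
`M - {t}` is represented by shrinking the domain to `D \ {t}`. -/
def Sat {W : Type} (M : Model W) : Form → Set W → W → Prop
  | .atom p, _, s => M.V p s
  | .top, _, _ => True
  | .neg φ, D, s => ¬ Sat M φ D s
  | .or φ ψ, D, s => Sat M φ D s ∨ Sat M ψ D s
  | .dia φ, D, s => ∃ t ∈ D, M.R s t ∧ Sat M φ D t
  | .rem φ ψ, D, s => ∃ t ∈ D, t ≠ s ∧ Sat M φ D t ∧ Sat M ψ (D \ {t}) s

/-- The removal modality distributes over disjunction in its first argument:
⟨-(φ₁ ∨ φ₂)⟩ψ ↔ ⟨-φ₁⟩ψ ∨ ⟨-φ₂⟩ψ, in every model (submodel) and at every point. -/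
theorem stmt1 {W : Type} (M : Model W) (D : Set W) (s : W) (φ₁ φ₂ ψ : Form) :
    Sat M (.rem (.or φ₁ φ₂) ψ) D s ↔
      (Sat M (.rem φ₁ ψ) D s ∨ Sat M (.rem φ₂ ψ) D s) := by
  simp only [Sat, or_and_right, and_or_left, exists_or]
end

section
/- MLSR formulas are invariant under SR-bisimulations: if Z is an SR-bisimulation and (M, s) Z (N, t), then for every MLSR formula φ, M, s ⊨ φ if and only if N, t ⊨ φ. -/
/-! The proof is an induction on the formula in which the related pair of pointed submodels
varies: the removal clauses supply, for the witness of `⟨-φ⟩ψ`, a partner that is related both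
as a point (for `φ`) and after removal from both domains (for `ψ`). -/

section

variable {W W' : Type}

structure IsSRBisimulation (M : Model W) (N : Model W') (Z : Set W → W → Set W' → W' → Prop) :
    Prop where
  atom_iff : ∀ D s E t, Z D s E t → ∀ p, (M.V p s ↔ N.V p t)
  zig : ∀ D s E t, Z D s E t → ∀ u ∈ D, M.R s u → ∃ v ∈ E, N.R t v ∧ Z D u E v
  zag : ∀ D s E t, Z D s E t → ∀ v ∈ E, N.R t v → ∃ u ∈ D, M.R s u ∧ Z D u E v
  forth : ∀ D s E t, Z D s E t → ∀ u ∈ D, u ≠ s →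
    ∃ v ∈ E, v ≠ t ∧ Z D u E v ∧ Z (D \ {u}) s (E \ {v}) t
  back : ∀ D s E t, Z D s E t → ∀ v ∈ E, v ≠ t →
    ∃ u ∈ D, u ≠ s ∧ Z D u E v ∧ Z (D \ {u}) s (E \ {v}) t

namespace IsSRBisimulation

variable {M : Model W} {N : Model W'} {Z : Set W → W → Set W' → W' → Prop}

theorem sat_iff (hZ : IsSRBisimulation M N Z) (φ : Form) :
    ∀ {D s E t}, Z D s E t → (Sat M φ D s ↔ Sat N φ E t) := by
  induction φ with
  | atom p => exact fun h => hZ.atom_iff _ _ _ _ h p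
  | top => exact fun _ => Iff.rfl
  | neg φ ih => exact fun h => not_congr (ih h)
  | or φ ψ ihφ ihψ => exact fun h => or_congr (ihφ h) (ihψ h)
  | dia φ ih =>
    intro D s E t h
    constructor
    · rintro ⟨u, hu, hsu, hφ⟩
      obtain ⟨v, hv, htv, huv⟩ := hZ.zig _ _ _ _ h u hu hsu
      exact ⟨v, hv, htv, (ih huv).mp hφ⟩
    · rintro ⟨v, hv, htv, hφ⟩
      obtain ⟨u, hu, hsu, huv⟩ := hZ.zag _ _ _ _ h v hv htv
      exact ⟨u, hu, hsu, (ih huv).mpr hφ⟩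
  | rem φ ψ ihφ ihψ =>
    intro D s E t h
    constructor
    · rintro ⟨u, hu, hus, hφ, hψ⟩
      obtain ⟨v, hv, hvt, huv, hrem⟩ := hZ.forth _ _ _ _ h u hu hus
      exact ⟨v, hv, hvt, (ihφ huv).mp hφ, (ihψ hrem).mp hψ⟩
    · rintro ⟨v, hv, hvt, hφ, hψ⟩
      obtain ⟨u, hu, hus, huv, hrem⟩ := hZ.back _ _ _ _ h v hv hvt
      exact ⟨u, hu, hus, (ihφ huv).mpr hφ, (ihψ hrem).mpr hψ⟩

end IsSRBisimulation

end

/-- MLSR formulas are invariant under SR-bisimulations: a relation between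
pointed submodels that agrees on atoms, satisfies the modal back-and-forth
clauses inside each model, and has the removal back-and-forth clauses. -/
theorem stmt4 {W W' : Type} (M : Model W) (N : Model W')
    (Z : Set W → W → Set W' → W' → Prop)
    (hatom : ∀ D s E t, Z D s E t → ∀ p, (M.V p s ↔ N.V p t))
    (hzig : ∀ D s E t, Z D s E t → ∀ u ∈ D, M.R s u → ∃ v ∈ E, N.R t v ∧ Z D u E v)
    (hzag : ∀ D s E t, Z D s E t → ∀ v ∈ E, N.R t v → ∃ u ∈ D, M.R s u ∧ Z D u E v)
    (hforth : ∀ D s E t, Z D s E t → ∀ u ∈ D, u ≠ s →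
      ∃ v ∈ E, v ≠ t ∧ Z D u E v ∧ Z (D \ {u}) s (E \ {v}) t)
    (hback : ∀ D s E t, Z D s E t → ∀ v ∈ E, v ≠ t →
      ∃ u ∈ D, u ≠ s ∧ Z D u E v ∧ Z (D \ {u}) s (E \ {v}) t)
    (D : Set W) (E : Set W') (s : W) (t : W') (h : Z D s E t) (φ : Form) :
    Sat M φ D s ↔ Sat N φ E t :=
  (IsSRBisimulation.mk hatom hzig hzag hforth hback).sat_iff φ h
end

section
/- The first-order property ∀y (Rxy ∨ Ryx) (totality/connectedness with the evaluation point) is not definable by any MLSR formula. Specifically: let M be the model consisting of two isolated reflexive points and N the model consisting of two points with the universal accessibility relation (both with empty valuation). Then every point of N satisfies ∀y (Rxy ∨ Ryx) while no point of M does, yet (M, s) and (N, t) satisfy exactly the same MLSR formulas for any points s, t, because the universal relation between the pointed models (M, x) and (N, y), together with all links between the one-point pointed submodels of M and N, is an SR-bisimulation. -/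
/-- Two isolated reflexive points. -/
def Mrefl : Model Bool := ⟨fun x y => x = y, fun _ _ => False⟩
/-- Two points with the universal relation. -/
def Nuniv : Model Bool := ⟨fun _ _ => True, fun _ _ => False⟩

/-! MLSR truth is invariant under SR-bisimulations. Linking all of `Mrefl` with all of `Nuniv`,
and every one-point submodel of one with every one-point submodel of the other, is such a
bisimulation: both models are reflexive at every point, and removing a point from either leaves a
single reflexive point, in which no further removal is possible. -/

/-- `Z` relates pointed submodels, each given by its domain and its point, as `Sat` does. -/
structure IsSRBisim {W W' : Type} (M : Model W) (N : Model W')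
    (Z : Set W → W → Set W' → W' → Prop) : Prop where
  atom_iff {D s E t} : Z D s E t → ∀ p, M.V p s ↔ N.V p t
  forth {D s E t} : Z D s E t → ∀ u ∈ D, M.R s u → ∃ v ∈ E, N.R t v ∧ Z D u E v
  back {D s E t} : Z D s E t → ∀ v ∈ E, N.R t v → ∃ u ∈ D, M.R s u ∧ Z D u E v
  rem_forth {D s E t} : Z D s E t → ∀ u ∈ D, u ≠ s →
    ∃ v ∈ E, v ≠ t ∧ Z D u E v ∧ Z (D \ {u}) s (E \ {v}) t
  rem_back {D s E t} : Z D s E t → ∀ v ∈ E, v ≠ t →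
    ∃ u ∈ D, u ≠ s ∧ Z D u E v ∧ Z (D \ {u}) s (E \ {v}) t

namespace IsSRBisim

variable {W W' : Type} {M : Model W} {N : Model W'} {Z : Set W → W → Set W' → W' → Prop}

theorem sat_iff (hZ : IsSRBisim M N Z) (φ : Form) :
    ∀ {D s E t}, Z D s E t → (Sat M φ D s ↔ Sat N φ E t) := by
  induction φ with
  | atom p => exact fun h => hZ.atom_iff h p
  | top => exact fun _ => Iff.rfl
  | neg φ ih => exact fun h => not_congr (ih h)
  | or φ ψ ihφ ihψ => exact fun h => or_congr (ihφ h) (ihψ h)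
  | dia φ ih =>
    intro D s E t h
    constructor
    · rintro ⟨u, hu, hsu, hφ⟩
      obtain ⟨v, hv, htv, huv⟩ := hZ.forth h u hu hsu
      exact ⟨v, hv, htv, (ih huv).1 hφ⟩
    · rintro ⟨v, hv, htv, hφ⟩
      obtain ⟨u, hu, hsu, huv⟩ := hZ.back h v hv htv
      exact ⟨u, hu, hsu, (ih huv).2 hφ⟩
  | rem φ ψ ihφ ihψ =>
    intro D s E t h
    constructor
    · rintro ⟨u, hu, hus, hφ, hψ⟩
      obtain ⟨v, hv, hvt, huv, hrem⟩ := hZ.rem_forth h u hu hus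
      exact ⟨v, hv, hvt, (ihφ huv).1 hφ, (ihψ hrem).1 hψ⟩
    · rintro ⟨v, hv, hvt, hφ, hψ⟩
      obtain ⟨u, hu, hus, huv, hrem⟩ := hZ.rem_back h v hv hvt
      exact ⟨u, hu, hus, (ihφ huv).2 hφ, (ihψ hrem).2 hψ⟩

end IsSRBisim

theorem Bool.univ_diff_singleton_of_ne {u s : Bool} (h : u ≠ s) :
    (Set.univ \ {u} : Set Bool) = {s} := by
  rw [← Set.compl_eq_univ_sdiff, Bool.compl_singleton, Bool.eq_not_iff.2 h.symm]

def reflUnivLink (D : Set Bool) (s : Bool) (E : Set Bool) (t : Bool) : Prop :=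
  (D = Set.univ ∧ E = Set.univ) ∨ (D = {s} ∧ E = {t})

theorem isSRBisim_reflUnivLink : IsSRBisim Mrefl Nuniv reflUnivLink where
  atom_iff _ _ := Iff.rfl
  forth := by
    rintro D s E t (⟨rfl, rfl⟩ | ⟨rfl, rfl⟩) u hu hsu
    · exact ⟨t, trivial, trivial, .inl ⟨rfl, rfl⟩⟩
    · obtain rfl := hu
      exact ⟨t, rfl, trivial, .inr ⟨rfl, rfl⟩⟩
  back := by
    rintro D s E t (⟨rfl, rfl⟩ | ⟨rfl, rfl⟩) v hv -
    · exact ⟨s, trivial, rfl, .inl ⟨rfl, rfl⟩⟩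
    · obtain rfl := hv
      exact ⟨s, rfl, rfl, .inr ⟨rfl, rfl⟩⟩
  rem_forth := by
    rintro D s E t (⟨rfl, rfl⟩ | ⟨rfl, rfl⟩) u hu hus
    · refine ⟨!t, trivial, Bool.not_ne_self t, .inl ⟨rfl, rfl⟩, .inr ⟨?_, ?_⟩⟩
      · exact Bool.univ_diff_singleton_of_ne hus
      · exact Bool.univ_diff_singleton_of_ne (Bool.not_ne_self t)
    · exact absurd hu hus
  rem_back := by
    rintro D s E t (⟨rfl, rfl⟩ | ⟨rfl, rfl⟩) v hv hvt
    · refine ⟨!s, trivial, Bool.not_ne_self s, .inl ⟨rfl, rfl⟩, .inr ⟨?_, ?_⟩⟩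
      · exact Bool.univ_diff_singleton_of_ne (Bool.not_ne_self s)
      · exact Bool.univ_diff_singleton_of_ne hvt
    · exact absurd hv hvt

theorem sat_mrefl_iff_sat_nuniv (φ : Form) (s t : Bool) :
    Sat Mrefl φ Set.univ s ↔ Sat Nuniv φ Set.univ t :=
  isSRBisim_reflUnivLink.sat_iff φ (.inl ⟨rfl, rfl⟩)

/-- ∀y (Rxy ∨ Ryx) is not MLSR-definable: every point of `Nuniv` satisfies it,
no point of `Mrefl` does, yet the two models satisfy exactly the same MLSR
formulas at every point; hence no MLSR formula defines this property. -/
theorem stmt5 :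
    (∀ t : Bool, ∀ y, Nuniv.R t y ∨ Nuniv.R y t) ∧
    (∀ s : Bool, ¬ ∀ y, Mrefl.R s y ∨ Mrefl.R y s) ∧
    (∀ (φ : Form) (s t : Bool), Sat Mrefl φ Set.univ s ↔ Sat Nuniv φ Set.univ t) ∧
    ¬ ∃ φ : Form, ∀ (W : Type) (M : Model W) (s : W),
        Sat M φ Set.univ s ↔ ∀ y, M.R s y ∨ M.R y s := by
  have mrefl_not_total (s : Bool) : ¬ ∀ y, Mrefl.R s y ∨ Mrefl.R y s := fun h => by
    simpa [Mrefl] using h (!s)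
  refine ⟨fun _ _ => .inl trivial, mrefl_not_total, sat_mrefl_iff_sat_nuniv, ?_⟩
  rintro ⟨φ, hφ⟩
  have sat_nuniv : Sat Nuniv φ Set.univ true := (hφ Bool Nuniv true).2 fun _ => .inl trivial
  exact mrefl_not_total true <|
    (hφ Bool Mrefl true).1 ((sat_mrefl_iff_sat_nuniv φ true true).2 sat_nuniv)
end

section
/- The translation τ from MLSR into first-order logic is truth-preserving: for every MLSR formula φ, pointed model (M, s), finite set of points D = {d₁, ..., d_k} of M not containing s, and set of variables X = {x₁, ..., x_k}, we have M - D, s ⊨ φ if and only if M ⊨ τ(φ, y, X) under the assignment sending y to s and xᵢ to dᵢ. In particular, with D = ∅, M, s ⊨ φ iff M ⊨ τ(φ, y, ∅)[y ↦ s]. -/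
/-- First-order syntax over the modal signature: unary predicates `P p`,
a binary relation `Rel`, equality, Booleans, and ∃ over named variables. -/
inductive FO : Type where
  | P : ℕ → ℕ → FO
  | Rel : ℕ → ℕ → FO
  | eq : ℕ → ℕ → FO
  | neg : FO → FO
  | or : FO → FO → FO
  | and : FO → FO → FO
  | ex : ℕ → FO → FO

/-- First-order satisfaction in the model `M` under assignment `a`. -/
def FOSat {W : Type} (M : Model W) : (ℕ → W) → FO → Prop
  | a, .P p v => M.V p (a v)
  | a, .Rel v w => M.R (a v) (a w)
  | a, .eq v w => a v = a w
  | a, .neg φ => ¬ FOSat M a φ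
  | a, .or φ ψ => FOSat M a φ ∨ FOSat M a ψ
  | a, .and φ ψ => FOSat M a φ ∧ FOSat M a ψ
  | a, .ex v φ => ∃ w : W, FOSat M (Function.update a v w) φ

/-- A variable fresh for the finite set `X`. -/
def fresh (X : Finset ℕ) : ℕ := X.sup id + 1

/-- ⋀_{x ∈ X} ¬(z = x). -/
noncomputable def noneOf (z : ℕ) (X : Finset ℕ) : FO :=
  X.toList.foldr (fun x acc => .and (.neg (.eq z x)) acc) (.eq 0 0)

/-- The compositional translation τ(φ, y, X) of MLSR into first-order logic;
`X` is the memory of variables standing for already-deleted points. -/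
noncomputable def tau : Form → ℕ → Finset ℕ → FO
  | .atom p, y, _ => .P p y
  | .top, y, _ => .eq y y
  | .neg φ, y, X => .neg (tau φ y X)
  | .or φ ψ, y, X => .or (tau φ y X) (tau ψ y X)
  | .dia φ, y, X =>
      let z := fresh (insert y X)
      .ex z (.and (.Rel y z) (.and (noneOf z X) (tau φ z X)))
  | .rem φ ψ, y, X =>
      let z := fresh (insert y X)
      .ex z (.and (.neg (.eq z y))
        (.and (noneOf z X) (.and (tau φ z X) (tau ψ y (insert z X)))))

/-! The invariant behind the translation: a variable set `X` under an assignment `a` stands for the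
current domain `W \ a '' X`. A quantified variable `z` is chosen fresh for `y` and `X`, so updating
it leaves `a y` and the deleted points alone; the conjunct `noneOf z X` then confines `z` to the
current domain, and adding `z` to the memory deletes its value. -/

open Function

lemma lt_fresh {X : Finset ℕ} {x : ℕ} (hx : x ∈ X) : x < fresh X :=
  Nat.lt_succ_of_le (Finset.le_sup (f := id) hx)

lemma fresh_notMem (X : Finset ℕ) : fresh X ∉ X := fun h => lt_irrefl _ (lt_fresh h)

lemma fresh_insert_ne (y : ℕ) (X : Finset ℕ) : fresh (insert y X) ≠ y :=
  fun h => fresh_notMem (insert y X) (h.symm ▸ Finset.mem_insert_self y X)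

lemma fresh_insert_notMem (y : ℕ) (X : Finset ℕ) : fresh (insert y X) ∉ X :=
  fun h => fresh_notMem (insert y X) (Finset.mem_insert_of_mem h)

lemma image_update_of_notMem {α β : Type*} [DecidableEq α] {s : Set α} {z : α} (hz : z ∉ s)
    (f : α → β) (t : β) : update f z t '' s = f '' s :=
  Set.image_congr fun _ hx => update_of_ne (ne_of_mem_of_not_mem hx hz) _ _

lemma diff_diff_singleton_eq_diff_insert {α : Type*} (u s : Set α) (t : α) :
    (u \ s) \ {t} = u \ insert t s := by
  rw [Set.sdiff_sdiff, Set.union_singleton]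

lemma foSat_noneOf_iff {W : Type} (M : Model W) (a : ℕ → W) (z : ℕ) (X : Finset ℕ) :
    FOSat M a (noneOf z X) ↔ ∀ x ∈ X, a z ≠ a x := by
  suffices ∀ l : List ℕ, FOSat M a (l.foldr (fun x acc => .and (.neg (.eq z x)) acc) (.eq 0 0)) ↔
      ∀ x ∈ l, a z ≠ a x by
    simp only [noneOf, this, Finset.mem_toList]
  intro l
  induction l with
  | nil => simp [FOSat]
  | cons b l ih => simp [FOSat, ih]

lemma foSat_noneOf_update_iff {W : Type} (M : Model W) (a : ℕ → W) {z : ℕ} {X : Finset ℕ}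
    (hz : z ∉ X) (t : W) :
    FOSat M (update a z t) (noneOf z X) ↔ t ∈ Set.univ \ a '' X := by
  simp only [foSat_noneOf_iff, update_self, Set.mem_sdiff, Set.mem_univ, true_and, Set.mem_image,
    Finset.mem_coe, not_exists, not_and]
  refine forall₂_congr fun x hx => ?_
  rw [update_of_ne (ne_of_mem_of_not_mem hx hz)]
  exact ne_comm

theorem stmt6_general {W : Type} (M : Model W) (φ : Form) (y : ℕ) (X : Finset ℕ)
    (a : ℕ → W) :
    Sat M φ (Set.univ \ a '' ↑X) (a y) ↔ FOSat M a (tau φ y X) := by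
  induction φ generalizing y X a with
  | atom p => rfl
  | top => simp [Sat, tau, FOSat]
  | neg φ ih => simp only [Sat, tau, FOSat, ih]
  | or φ ψ ih₁ ih₂ => simp only [Sat, tau, FOSat, ih₁, ih₂]
  | dia φ ih =>
    have hzy := fresh_insert_ne y X
    have hzX := fresh_insert_notMem y X
    simp only [Sat, tau, FOSat]
    refine exists_congr fun t => ?_
    rw [← ih, foSat_noneOf_update_iff M a hzX, update_self, update_of_ne hzy.symm,
      image_update_of_notMem (Finset.mem_coe.not.mpr hzX)]
    tauto
  | rem φ ψ ih₁ ih₂ =>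
    have hzy := fresh_insert_ne y X
    have hzX := fresh_insert_notMem y X
    simp only [Sat, tau, FOSat]
    refine exists_congr fun t => ?_
    rw [← ih₁, ← ih₂, foSat_noneOf_update_iff M a hzX, update_self, update_of_ne hzy.symm,
      Finset.coe_insert, Set.image_insert_eq, update_self,
      image_update_of_notMem (Finset.mem_coe.not.mpr hzX), diff_diff_singleton_eq_diff_insert]
    tauto

/-- τ is truth-preserving: for a set of variables `X` naming (injectively, via
the assignment `a`) a finite set `D = a '' X` of deleted points not containing
`s = a y`, we have `M - D, s ⊨ φ` iff `M, a ⊨ τ(φ, y, X)`.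
The case `X = ∅` gives `M, s ⊨ φ ↔ M ⊨ τ(φ, y, ∅)[y ↦ s]`. -/
theorem stmt6 {W : Type} (M : Model W) (φ : Form) (y : ℕ) (X : Finset ℕ)
    (a : ℕ → W) (hy : y ∉ X) (hinj : Set.InjOn a ↑X) (hs : a y ∉ a '' ↑X) :
    Sat M φ (Set.univ \ a '' ↑X) (a y) ↔ FOSat M a (tau φ y X) :=
  stmt6_general M φ y X a
end

section
/- If a set of tile types T = {T₁, ..., T_n} tiles the quadrant ℕ × ℕ (i.e., there is a function t : ℕ × ℕ → T such that horizontally adjacent tiles match on right/left colors and vertically adjacent tiles match on up/down colors), then the MLSR formula φ_T (the conjunction of Func, Conf, Unique, Vert, Horiz as defined in the context) is satisfiable: the model with domain ℕ × ℕ, R_u relating (n,m) to (n,m+1), R_r relating (n,m) to (n+1,m), and valuation making t_i true exactly at points tiled by T_i, satisfies φ_T at every point. -/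
/-- MLSR with two modalities ◇_u, ◇_r, a universal modality U,
and the removal modality. -/
inductive Form2 : Type where
  | atom : ℕ → Form2
  | top : Form2
  | neg : Form2 → Form2
  | or : Form2 → Form2 → Form2
  | diau : Form2 → Form2
  | diar : Form2 → Form2
  | uni : Form2 → Form2
  | rem : Form2 → Form2 → Form2

/-- A model with two accessibility relations R_u and R_r. -/
structure Model2 (W : Type) where
  Ru : W → W → Prop
  Rr : W → W → Prop
  V : ℕ → W → Prop

/-- Truth relative to a current domain `D` (so ⟨-φ⟩ψ deletes a point). -/
def Sat2 {W : Type} (M : Model2 W) : Form2 → Set W → W → Prop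
  | .atom p, _, s => M.V p s
  | .top, _, _ => True
  | .neg φ, D, s => ¬ Sat2 M φ D s
  | .or φ ψ, D, s => Sat2 M φ D s ∨ Sat2 M ψ D s
  | .diau φ, D, s => ∃ t ∈ D, M.Ru s t ∧ Sat2 M φ D t
  | .diar φ, D, s => ∃ t ∈ D, M.Rr s t ∧ Sat2 M φ D t
  | .uni φ, D, _ => ∀ t ∈ D, Sat2 M φ D t
  | .rem φ ψ, D, s => ∃ t ∈ D, t ≠ s ∧ Sat2 M φ D t ∧ Sat2 M ψ (D \ {t}) s

def Form2.and (a b : Form2) : Form2 := .neg (.or (.neg a) (.neg b))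
def Form2.impl (a b : Form2) : Form2 := .or (.neg a) b
def bigAnd2 (l : List Form2) : Form2 := l.foldr Form2.and .top
def bigOr2 (l : List Form2) : Form2 := l.foldr .or (.neg .top)

/-- A tile type with colors on its four edges. -/
structure Tile where
  up : ℕ
  right : ℕ
  down : ℕ
  left : ℕ

/-- (Func): U⟨-⊤⟩(□_u⊥ ∧ ◇_r⊤) ∧ U⟨-⊤⟩(□_r⊥ ∧ ◇_u⊤). -/
def funcF : Form2 :=
  Form2.and
    (.uni (.rem .top (Form2.and (.neg (.diau .top)) (.diar .top))))
    (.uni (.rem .top (Form2.and (.neg (.diar .top)) (.diau .top))))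

/-- (Conf): U⟨-⊤⟩(◇_r□_u⊥ ∧ ◇_u□_r⊥). -/
def confF : Form2 :=
  .uni (.rem .top (Form2.and (.diar (.neg (.diau .top))) (.diau (.neg (.diar .top)))))

/-- (Unique): U(⋁ᵢ tᵢ ∧ ⋀_{i<j}(tᵢ → ¬tⱼ)), where tᵢ is the atom i. -/
def uniqueF (n : ℕ) : Form2 :=
  .uni (Form2.and
    (bigOr2 ((List.finRange n).map fun i => .atom i.1))
    (bigAnd2 ((List.finRange n).map fun i =>
      bigAnd2 ((List.finRange n).filterMap fun j =>
        if i < j then some (Form2.impl (.atom i.1) (.neg (.atom j.1))) else none))))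

/-- (Vert): U⋀ᵢ(tᵢ → ◇_u ⋁_{j : u(Tᵢ)=d(Tⱼ)} tⱼ). -/
def vertF (n : ℕ) (T : Fin n → Tile) : Form2 :=
  .uni (bigAnd2 ((List.finRange n).map fun i =>
    Form2.impl (.atom i.1) (.diau (bigOr2 ((List.finRange n).filterMap fun j =>
      if (T i).up = (T j).down then some (.atom j.1) else none)))))

/-- (Horiz): U⋀ᵢ(tᵢ → ◇_r ⋁_{j : r(Tᵢ)=l(Tⱼ)} tⱼ). -/
def horizF (n : ℕ) (T : Fin n → Tile) : Form2 :=
  .uni (bigAnd2 ((List.finRange n).map fun i =>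
    Form2.impl (.atom i.1) (.diar (bigOr2 ((List.finRange n).filterMap fun j =>
      if (T i).right = (T j).left then some (.atom j.1) else none)))))

/-- φ_T: the conjunction Func ∧ Conf ∧ Unique ∧ Vert ∧ Horiz. -/
def phiT (n : ℕ) (T : Fin n → Tile) : Form2 :=
  bigAnd2 [funcF, confF, uniqueF n, vertF n T, horizF n T]

/-!
Each conjunct of φ_T is checked directly in the grid model. The removal witnesses come from the
grid: deleting the upper neighbour of a point leaves it with no up-successor but still a right
one (and symmetrically), and deleting the diagonal point (a+1, b+1) leaves the right neighbour
(a+1, b) without an up-successor and the upper neighbour (a, b+1) without a right-successor.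
Unique holds because the valuation is read off a function, and Vert and Horiz because the actual
neighbours in the tiling carry matching colours.
-/

open Set

section Semantics

variable {W : Type} {M : Model2 W} {D : Set W} {s : W}

@[simp]
theorem sat_neg {a : Form2} : Sat2 M (.neg a) D s ↔ ¬Sat2 M a D s := Iff.rfl

@[simp]
theorem sat_and {a b : Form2} : Sat2 M (Form2.and a b) D s ↔ Sat2 M a D s ∧ Sat2 M b D s := by
  simp [Form2.and, Sat2]

@[simp]
theorem sat_impl {a b : Form2} : Sat2 M (Form2.impl a b) D s ↔ (Sat2 M a D s → Sat2 M b D s) := by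
  simp [Form2.impl, Sat2, imp_iff_not_or]

@[simp]
theorem sat_bigAnd {l : List Form2} : Sat2 M (bigAnd2 l) D s ↔ ∀ f ∈ l, Sat2 M f D s := by
  induction l with
  | nil => simp [bigAnd2, Sat2]
  | cons a l ih => simp [bigAnd2, ← ih]

@[simp]
theorem sat_bigOr {l : List Form2} : Sat2 M (bigOr2 l) D s ↔ ∃ f ∈ l, Sat2 M f D s := by
  induction l with
  | nil => simp [bigOr2, Sat2]
  | cons a l ih => simp [bigOr2, Sat2, ← ih]

end Semantics

section Labelling

variable {W : Type} {n : ℕ} {M : Model2 W} {lab : W → Fin n} {D : Set W}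

theorem sat_bigOr_atoms (hV : ∀ i p, M.V i p ↔ (lab p : ℕ) = i) (P : Fin n → Prop)
    [DecidablePred P] (t : W) :
    Sat2 M (bigOr2 ((List.finRange n).filterMap fun j => if P j then some (.atom j.1) else none))
      D t ↔ P (lab t) := by
  simp [Sat2, hV, Fin.val_inj, eq_comm]

theorem sat_uniqueF (hV : ∀ i p, M.V i p ↔ (lab p : ℕ) = i) (s : W) :
    Sat2 M (uniqueF n) D s := by
  intro t _
  simp +contextual [Sat2, hV, Fin.val_inj, ne_of_lt]

theorem sat_vertF (T : Fin n → Tile) (hV : ∀ i p, M.V i p ↔ (lab p : ℕ) = i)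
    (hmatch : ∀ s ∈ D, ∃ t ∈ D, M.Ru s t ∧ (T (lab s)).up = (T (lab t)).down)
    (s : W) : Sat2 M (vertF n T) D s := by
  simp only [vertF, Sat2, sat_bigAnd, List.forall_mem_map]
  rintro p hp i -
  rw [sat_impl, Sat2, hV, Fin.val_inj]
  rintro rfl
  obtain ⟨q, hq, hpq, hcol⟩ := hmatch p hp
  exact ⟨q, hq, hpq, (sat_bigOr_atoms hV _ q).2 hcol⟩

theorem sat_horizF (T : Fin n → Tile) (hV : ∀ i p, M.V i p ↔ (lab p : ℕ) = i)
    (hmatch : ∀ s ∈ D, ∃ t ∈ D, M.Rr s t ∧ (T (lab s)).right = (T (lab t)).left)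
    (s : W) : Sat2 M (horizF n T) D s := by
  simp only [horizF, Sat2, sat_bigAnd, List.forall_mem_map]
  rintro p hp i -
  rw [sat_impl, Sat2, hV, Fin.val_inj]
  rintro rfl
  obtain ⟨q, hq, hpq, hcol⟩ := hmatch p hp
  exact ⟨q, hq, hpq, (sat_bigOr_atoms hV _ q).2 hcol⟩

end Labelling

section Grid

def gridModel (V : ℕ → ℕ × ℕ → Prop) : Model2 (ℕ × ℕ) :=
  ⟨fun p q => q = (p.1, p.2 + 1), fun p q => q = (p.1 + 1, p.2), V⟩

variable {V : ℕ → ℕ × ℕ → Prop} {D : Set (ℕ × ℕ)}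

@[simp]
theorem gridModel_sat_diau_top (s : ℕ × ℕ) :
    Sat2 (gridModel V) (.diau .top) D s ↔ (s.1, s.2 + 1) ∈ D := by
  simp [Sat2, gridModel]

@[simp]
theorem gridModel_sat_diar_top (s : ℕ × ℕ) :
    Sat2 (gridModel V) (.diar .top) D s ↔ (s.1 + 1, s.2) ∈ D := by
  simp [Sat2, gridModel]

theorem gridModel_sat_funcF (s : ℕ × ℕ) : Sat2 (gridModel V) funcF univ s := by
  refine sat_and.2 ⟨fun t _ => ⟨(t.1, t.2 + 1), trivial, ?_, trivial, ?_⟩,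
    fun t _ => ⟨(t.1 + 1, t.2), trivial, ?_, trivial, ?_⟩⟩ <;>
  simp [Prod.ext_iff]

theorem gridModel_sat_confF (s : ℕ × ℕ) : Sat2 (gridModel V) confF univ s := by
  intro t _
  refine ⟨(t.1 + 1, t.2 + 1), trivial, by simp [Prod.ext_iff], trivial, sat_and.2 ⟨?_, ?_⟩⟩
  · exact ⟨(t.1 + 1, t.2), by simp [Prod.ext_iff], rfl, by simp⟩
  · exact ⟨(t.1, t.2 + 1), by simp [Prod.ext_iff], rfl, by simp⟩

end Grid

/-- If T tiles ℕ × ℕ, then φ_T holds at every point of the grid model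
(R_u = vertical successor, R_r = horizontal successor, atom i true exactly
at points tiled by the i-th tile type). -/
theorem stmt14 (n : ℕ) (T : Fin n → Tile) (til : ℕ × ℕ → Fin n)
    (hh : ∀ a b : ℕ, (T (til (a, b))).right = (T (til (a + 1, b))).left)
    (hv : ∀ a b : ℕ, (T (til (a, b))).up = (T (til (a, b + 1))).down) :
    ∀ s : ℕ × ℕ,
      Sat2 (⟨fun p q => q = (p.1, p.2 + 1),
             fun p q => q = (p.1 + 1, p.2),
             fun i p => (til p : ℕ) = i⟩ : Model2 (ℕ × ℕ))
        (phiT n T) Set.univ s := by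
  intro s
  have hV : ∀ i p, (gridModel fun i p => (til p : ℕ) = i).V i p ↔ (til p : ℕ) = i :=
    fun _ _ => Iff.rfl
  simp only [phiT, sat_bigAnd, List.mem_cons, List.not_mem_nil, or_false, forall_eq_or_imp,
    forall_eq]
  exact ⟨gridModel_sat_funcF s, gridModel_sat_confF s, sat_uniqueF hV s,
    sat_vertF T hV (fun ⟨a, b⟩ _ => ⟨(a, b + 1), trivial, rfl, hv a b⟩) s,
    sat_horizF T hV (fun ⟨a, b⟩ _ => ⟨(a + 1, b), trivial, rfl, hh a b⟩) s⟩
end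

section
/- Monadic first-order logic with identity is closed under the removal modality: for every formula ψ(x) of MFOL_= with one free variable x and every formula φ(y) of MFOL_= with one free variable, the property 'there exists an object d ≠ x satisfying φ in the model M such that ψ holds of x in the submodel M - {d}' is again expressible by an MFOL_= formula with free variable x. In particular, the validity ⟨-(sd ∧ SD)⟩NF ↔ (SD ∧ ⟨-sd⟩NF) holds whenever SD is a sentence (no free variables), and ⟨-sd_i⟩(sd' ∧ SD) is equivalent to sd' ∧ SD[i := i+1], where SD[i := i+1] increments by one the count in the i-th conjunct of the global state description SD. -/
/-! The removal modality is definable by relativization: `⟨-φ⟩ψ` holds at `x` iff some `t ≠ x`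
satisfies `φ` and `ψ` holds at `x` once every quantifier of `ψ` is restricted to elements `≠ t`.
For state descriptions it is a counting fact: deleting an element of local type `σ` lowers the
number of `σ`-elements by one and leaves every other count unchanged, so a global state
description holds after the deletion iff the one with its `σ`-count raised by one holds before. -/

/-- Monadic first-order logic with identity over unary predicates P₀,…,P_{k-1}:
atomic Pᵢ(v), v = w, ¬, ∨, and ∃ over named variables. -/
inductive MF (k : ℕ) : Type where
  | P : Fin k → ℕ → MF k
  | eq : ℕ → ℕ → MF k
  | neg : MF k → MF k
  | or : MF k → MF k → MF k
  | ex : ℕ → MF k → MF k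

/-- Satisfaction in a monadic structure (interpretation `I`, assignment `a`),
relative to a current domain `Dom` (so submodels can be formed by deletion). -/
def MSatD {k : ℕ} {W : Type} (Dom : Set W) (I : Fin k → W → Prop) :
    (ℕ → W) → MF k → Prop
  | a, .P i v => I i (a v)
  | a, .eq v w => a v = a w
  | a, .neg φ => ¬ MSatD Dom I a φ
  | a, .or φ ψ => MSatD Dom I a φ ∨ MSatD Dom I a ψ
  | a, .ex v φ => ∃ w ∈ Dom, MSatD Dom I (Function.update a v w) φ

/-- Plain satisfaction (full domain). -/
def MSat {k : ℕ} {W : Type} (I : Fin k → W → Prop) (a : ℕ → W) (φ : MF k) : Prop :=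
  MSatD Set.univ I a φ

def MF.and {k : ℕ} (a b : MF k) : MF k := .neg (.or (.neg a) (.neg b))
def mtop {k : ℕ} : MF k := .eq 0 0
def mbot {k : ℕ} : MF k := .neg mtop
def bigAndM {k : ℕ} (l : List (MF k)) : MF k := l.foldr MF.and mtop
def bigOrM {k : ℕ} (l : List (MF k)) : MF k := l.foldr .or mbot

/-- Quantifier depth. -/
def qdepth {k : ℕ} : MF k → ℕ
  | .P _ _ => 0
  | .eq _ _ => 0
  | .neg φ => qdepth φ
  | .or φ ψ => max (qdepth φ) (qdepth ψ)
  | .ex _ φ => qdepth φ + 1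

/-- Free variables. -/
def fv {k : ℕ} : MF k → Finset ℕ
  | .P _ v => {v}
  | .eq v w => {v, w}
  | .neg φ => fv φ
  | .or φ ψ => fv φ ∪ fv ψ
  | .ex v φ => fv φ \ {v}

/-- The local state description sd_σ applied to variable v:
⋀ᵢ ±Pᵢ(v) according to σ. -/
def sdF {k : ℕ} (σ : Fin k → Bool) (v : ℕ) : MF k :=
  bigAndM ((List.finRange k).map fun i => if σ i then .P i v else .neg (.P i v))

/-- 'At least c objects satisfy sd_σ', using bound variables start,…,start+c-1. -/
noncomputable def atLeastF {k : ℕ} (σ : Fin k → Bool) (c start : ℕ) : MF k :=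
  let vs := List.range' start c
  vs.foldr .ex
    (MF.and (bigAndM (vs.map (sdF σ)))
      (bigAndM ((vs.product vs).filterMap fun p =>
        if p.1 < p.2 then some (.neg (.eq p.1 p.2)) else none)))

/-- 'Exactly c objects satisfy sd_σ'. -/
noncomputable def exactlyF {k : ℕ} (σ : Fin k → Bool) (c start : ℕ) : MF k :=
  MF.and (atLeastF σ c start) (.neg (atLeastF σ (c + 1) start))

/-- The list of all local state description patterns σ : Fin k → Bool. -/
noncomputable def sigList (k : ℕ) : List (Fin k → Bool) :=
  (Finset.univ : Finset (Fin k → Bool)).toList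

/-- A global state description as data: for each σ, either (inl c) 'exactly c'
or (inr c) 'at least c'; its formula uses fresh bound variables from 1 on
(variable 0 is the distinguished free variable x). -/
noncomputable def toSDF {k : ℕ} (cnt : (Fin k → Bool) → ℕ ⊕ ℕ) : MF k :=
  bigAndM ((sigList k).map fun σ =>
    match cnt σ with
    | .inl c => exactlyF σ c 1
    | .inr c => atLeastF σ c 1)

/-- SD[i := i+1]: increment the count of the state description σ₀ by one. -/
def bump {k : ℕ} (σ₀ : Fin k → Bool) (cnt : (Fin k → Bool) → ℕ ⊕ ℕ) :
    (Fin k → Bool) → ℕ ⊕ ℕ :=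
  fun σ => if σ = σ₀ then
      (match cnt σ with
       | .inl c => .inl (c + 1)
       | .inr c => .inr (c + 1))
    else cnt σ

section Semantics
variable {k : ℕ} {W : Type} {D : Set W} {I : Fin k → W → Prop} {a : ℕ → W}

@[simp] lemma msatD_P {i : Fin k} {v : ℕ} : MSatD D I a (.P i v) ↔ I i (a v) := Iff.rfl
@[simp] lemma msatD_eq {v w : ℕ} : MSatD D I a (.eq v w) ↔ a v = a w := Iff.rfl
@[simp] lemma msatD_neg {φ : MF k} : MSatD D I a (.neg φ) ↔ ¬ MSatD D I a φ := Iff.rfl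
@[simp] lemma msatD_or {φ ψ : MF k} :
    MSatD D I a (.or φ ψ) ↔ MSatD D I a φ ∨ MSatD D I a ψ := Iff.rfl
@[simp] lemma msatD_ex {v : ℕ} {φ : MF k} :
    MSatD D I a (.ex v φ) ↔ ∃ w ∈ D, MSatD D I (Function.update a v w) φ := Iff.rfl

@[simp] lemma msatD_and {φ ψ : MF k} :
    MSatD D I a (MF.and φ ψ) ↔ MSatD D I a φ ∧ MSatD D I a ψ := by
  simp [MF.and]

lemma msatD_bigAndM {l : List (MF k)} :
    MSatD D I a (bigAndM l) ↔ ∀ φ ∈ l, MSatD D I a φ := by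
  induction l with
  | nil => simp [bigAndM, mtop]
  | cons φ l ih => simp [bigAndM, ← ih]

@[simp] lemma fv_and {φ ψ : MF k} : fv (MF.and φ ψ) = fv φ ∪ fv ψ := rfl

lemma msatD_congr {φ : MF k} {a b : ℕ → W} (h : ∀ v ∈ fv φ, a v = b v) :
    MSatD D I a φ ↔ MSatD D I b φ := by
  induction φ generalizing a b with
  | P i v => simp [h v (by simp [fv])]
  | eq v w => simp [h v (by simp [fv]), h w (by simp [fv])]
  | neg φ ih => simp [ih h]
  | or φ ψ ihφ ihψ =>
    simp [ihφ fun v hv => h v (by simp [fv, hv]), ihψ fun v hv => h v (by simp [fv, hv])]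
  | ex u φ ih =>
    refine exists_congr fun w => and_congr_right fun _ => ih fun v hv => ?_
    rcases eq_or_ne v u with rfl | hvu
    · simp
    · simpa [hvu] using h v (by simp [fv, hv, hvu])

lemma msatD_congr_of_fv_subset_zero {φ : MF k} (hφ : fv φ ⊆ {0}) {a b : ℕ → W}
    (h : a 0 = b 0) : MSatD D I a φ ↔ MSatD D I b φ :=
  msatD_congr fun v hv => by rwa [Finset.mem_singleton.1 (hφ hv)]

open Classical in
noncomputable def stateOf (I : Fin k → W → Prop) (w : W) : Fin k → Bool :=
  fun i => decide (I i w)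

lemma msatD_sdF {σ : Fin k → Bool} {v : ℕ} :
    MSatD D I a (sdF σ v) ↔ stateOf I (a v) = σ := by
  simp only [sdF, msatD_bigAndM, List.forall_mem_map, List.mem_finRange, true_imp_iff,
    funext_iff, stateOf]
  refine forall_congr' fun i => ?_
  cases σ i <;> simp

end Semantics

def boundVars {k : ℕ} : MF k → Finset ℕ
  | .P _ _ => ∅
  | .eq _ _ => ∅
  | .neg φ => boundVars φ
  | .or φ ψ => boundVars φ ∪ boundVars ψ
  | .ex v φ => insert v (boundVars φ)

def relativize {k : ℕ} (t : ℕ) : MF k → MF k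
  | .P i v => .P i v
  | .eq v w => .eq v w
  | .neg φ => .neg (relativize t φ)
  | .or φ ψ => .or (relativize t φ) (relativize t ψ)
  | .ex v φ => .ex v (MF.and (.neg (.eq v t)) (relativize t φ))

section Relativization
variable {k : ℕ} {W : Type} {D : Set W} {I : Fin k → W → Prop}

lemma fv_relativize_subset (t : ℕ) (φ : MF k) : fv (relativize t φ) ⊆ insert t (fv φ) := by
  induction φ with
  | P i v => simp [relativize]
  | eq v w => simp [relativize, Finset.subset_insert]
  | neg φ ih => exact ih
  | or φ ψ ihφ ihψ =>
    simp only [relativize, fv]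
    grind
  | ex v φ ih =>
    simp only [relativize, fv, fv_and]
    grind

lemma msatD_relativize {t : ℕ} {φ : MF k} (ht : t ∉ boundVars φ) {a : ℕ → W} :
    MSatD D I a (relativize t φ) ↔ MSatD (D \ {a t}) I a φ := by
  induction φ generalizing a with
  | P i v => rfl
  | eq v w => rfl
  | neg φ ih => simp [relativize, ih ht]
  | or φ ψ ihφ ihψ =>
    simp only [boundVars, Finset.mem_union, not_or] at ht
    simp [relativize, ihφ ht.1, ihψ ht.2]
  | ex v φ ih =>
    simp only [boundVars, Finset.mem_insert, not_or] at ht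
    have hupd : ∀ w : W, Function.update a v w t = a t :=
      fun w => Function.update_of_ne ht.1 _ _
    simp [relativize, ih ht.2, hupd, and_assoc]

end Relativization

theorem exists_removal_formula {k : ℕ} (φ ψ : MF k) (hφ : fv φ ⊆ {0}) (hψ : fv ψ ⊆ {0}) :
    ∃ χ : MF k, fv χ ⊆ {0} ∧
      ∀ (W : Type) (I : Fin k → W → Prop) (a : ℕ → W),
        ((∃ d : W, d ≠ a 0 ∧ MSatD Set.univ I (Function.update a 0 d) φ ∧
            MSatD (Set.univ \ {d}) I a ψ) ↔ MSatD Set.univ I a χ) := by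
  obtain ⟨t, ht⟩ := Infinite.exists_notMem_finset (insert 0 (boundVars ψ))
  rw [Finset.mem_insert, not_or] at ht
  -- `∃ 0 (0 = t ∧ φ)` substitutes `t` for the free variable `0` of `φ` without renaming.
  refine ⟨.ex t (MF.and (.neg (.eq t 0))
    (MF.and (.ex 0 (MF.and (.eq 0 t) φ)) (relativize t ψ))), ?_, fun W I a => ?_⟩
  · have := fv_relativize_subset t ψ
    simp only [fv, fv_and]
    grind
  · refine exists_congr fun d => ?_
    have h0 (w : W) : Function.update a t w 0 = a 0 := Function.update_of_ne (Ne.symm ht.1) _ _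
    have hφd : MSatD Set.univ I (Function.update (Function.update a t d) 0 d) φ ↔
        MSatD Set.univ I (Function.update a 0 d) φ :=
      msatD_congr_of_fv_subset_zero hφ (by simp)
    have hψd : MSatD (Set.univ \ {d}) I (Function.update a t d) ψ ↔
        MSatD (Set.univ \ {d}) I a ψ :=
      msatD_congr_of_fv_subset_zero hψ (h0 d)
    simp [msatD_relativize ht.2, h0, Function.update_of_ne ht.1, hφd, hψd, eq_comm]

theorem Set.exists_eqOn_compl_injOn_iff {α β : Type*} {s : Set α} (hs : s.Finite)
    (a : α → β) (S : Set β) :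
    (∃ b : α → β, (∀ v ∉ s, b v = a v) ∧ MapsTo b s S ∧ InjOn b s) ↔ s.encard ≤ S.encard := by
  refine ⟨fun ⟨b, _, hmaps, hinj⟩ => encard_le_encard_of_injOn hmaps hinj, fun h => ?_⟩
  rcases s.eq_empty_or_nonempty with rfl | ⟨x, -⟩
  · exact ⟨a, fun _ _ => rfl, mapsTo_empty _ _, injOn_empty _⟩
  have : Nonempty β := ⟨a x⟩
  classical
  obtain ⟨f, hf, hinj⟩ := hs.exists_injOn_of_encard_le h
  exact ⟨s.piecewise f a, fun v hv => s.piecewise_eq_of_notMem f a hv,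
    fun v hv => (s.piecewise_eq_of_mem f a hv).symm ▸ hf hv,
    hinj.congr (s.piecewise_eqOn f a).symm⟩

theorem Set.injOn_iff_forall_lt_ne {α β : Type*} [LinearOrder α] {s : Set α} {b : α → β} :
    InjOn b s ↔ ∀ u ∈ s, ∀ v ∈ s, u < v → b u ≠ b v := by
  refine ⟨fun h u hu v hv huv hb => huv.ne (h hu hv hb), fun h u hu v hv hb => ?_⟩
  by_contra huv
  rcases lt_or_gt_of_ne huv with huv | huv
  exacts [h u hu v hv huv hb, h v hv u hu huv hb.symm]

section Counting
variable {k : ℕ} {W : Type} {D : Set W} {I : Fin k → W → Prop}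

lemma msatD_foldr_ex {vs : List ℕ} (hvs : vs.Nodup) {θ : MF k} {a : ℕ → W} :
    MSatD D I a (vs.foldr .ex θ) ↔
      ∃ b : ℕ → W, (∀ v ∉ vs, b v = a v) ∧ (∀ v ∈ vs, b v ∈ D) ∧ MSatD D I b θ := by
  induction vs generalizing a with
  | nil =>
    refine ⟨fun h => ⟨a, fun _ _ => rfl, by simp, h⟩, fun ⟨b, hb, _, h⟩ => ?_⟩
    rwa [show b = a from funext fun v => hb v List.not_mem_nil] at h
  | cons u vs ih =>
    obtain ⟨hu, hvs⟩ := List.nodup_cons.1 hvs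
    simp only [List.foldr_cons, msatD_ex, ih hvs]
    constructor
    · rintro ⟨w, hw, b, hb, hbD, hθ⟩
      refine ⟨b, fun v hv => ?_, ?_, hθ⟩
      · rw [List.mem_cons, not_or] at hv
        rw [hb v hv.2, Function.update_of_ne hv.1]
      · simpa [hb u hu, hw] using hbD
    · rintro ⟨b, hb, hbD, hθ⟩
      refine ⟨b u, hbD u List.mem_cons_self, b, fun v hv => ?_,
        fun v hv => hbD v (List.mem_cons_of_mem _ hv), hθ⟩
      rcases eq_or_ne v u with rfl | hvu
      · simp
      · rw [Function.update_of_ne hvu, hb v (by simp [hvu, hv])]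

noncomputable def stateCount (D : Set W) (I : Fin k → W → Prop) (σ : Fin k → Bool) : ℕ∞ :=
  {w | w ∈ D ∧ stateOf I w = σ}.encard

lemma msatD_bigAndM_distinct {vs : List ℕ} {b : ℕ → W} :
    MSatD D I b (bigAndM ((vs.product vs).filterMap fun p =>
        if p.1 < p.2 then some (.neg (.eq p.1 p.2)) else none)) ↔
      ∀ u ∈ vs, ∀ v ∈ vs, u < v → b u ≠ b v := by
  simp only [msatD_bigAndM, List.mem_filterMap, Prod.exists, List.pair_mem_product]
  constructor
  · intro h u hu v hv huv
    simpa using h (.neg (.eq u v)) ⟨u, v, ⟨hu, hv⟩, by simp [huv]⟩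
  · rintro h φ ⟨u, v, ⟨hu, hv⟩, hφ⟩
    split_ifs at hφ with huv
    cases hφ
    simpa using h u hu v hv huv

lemma msatD_atLeastF {σ : Fin k → Bool} {c start : ℕ} {a : ℕ → W} :
    MSatD D I a (atLeastF σ c start) ↔ (c : ℕ∞) ≤ stateCount D I σ := by
  have hvs : (List.range' start c).Nodup := List.nodup_range'
  have hcard : {v | v ∈ List.range' start c}.encard = c := by
    rw [← List.coe_toFinset, Set.encard_coe_eq_coe_finsetCard, List.toFinset_card_of_nodup hvs,
      List.length_range']
  rw [atLeastF, msatD_foldr_ex hvs, stateCount, ← hcard,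
    ← Set.exists_eqOn_compl_injOn_iff (List.finite_toSet _) a]
  refine exists_congr fun b => and_congr_right fun _ => ?_
  rw [msatD_and, msatD_bigAndM_distinct, Set.injOn_iff_forall_lt_ne]
  simp only [msatD_bigAndM, List.forall_mem_map, msatD_sdF, Set.MapsTo, Set.mem_ofPred_eq,
    forall_and, and_assoc]

lemma msatD_exactlyF {σ : Fin k → Bool} {c start : ℕ} {a : ℕ → W} :
    MSatD D I a (exactlyF σ c start) ↔ stateCount D I σ = c := by
  rw [exactlyF, msatD_and, msatD_neg, msatD_atLeastF, msatD_atLeastF, Nat.cast_add_one,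
    ENat.add_one_le_iff (ENat.natCast_ne_top c), not_lt, le_antisymm_iff, and_comm]

end Counting

def SatCount : ℕ ⊕ ℕ → ℕ∞ → Prop
  | .inl c, n => n = c
  | .inr c, n => c ≤ n

lemma SatCount.le {e : ℕ ⊕ ℕ} {n : ℕ∞} (h : SatCount e n) : ((e.elim id id : ℕ) : ℕ∞) ≤ n := by
  cases e with
  | inl c => exact h.ge
  | inr c => exact h

lemma satCount_map_succ {e : ℕ ⊕ ℕ} {n : ℕ∞} :
    SatCount (e.map (· + 1) (· + 1)) (n + 1) ↔ SatCount e n := by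
  cases e with
  | inl c =>
    simp only [SatCount, Sum.map_inl, Nat.cast_add_one]
    exact (ENat.add_left_injective_of_ne_top ENat.one_ne_top).eq_iff
  | inr c =>
    simp only [SatCount, Sum.map_inr, Nat.cast_add_one]
    exact ENat.add_le_add_iff_right ENat.one_ne_top

lemma bump_self {k : ℕ} (σ₀ : Fin k → Bool) (cnt : (Fin k → Bool) → ℕ ⊕ ℕ) :
    bump σ₀ cnt σ₀ = (cnt σ₀).map (· + 1) (· + 1) := by
  simp only [bump]
  cases cnt σ₀ <;> rfl

lemma bump_of_ne {k : ℕ} {σ₀ σ : Fin k → Bool} (cnt : (Fin k → Bool) → ℕ ⊕ ℕ) (h : σ ≠ σ₀) :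
    bump σ₀ cnt σ = cnt σ :=
  if_neg h

section GlobalStateDescriptions
variable {k : ℕ} {W : Type} {D : Set W} {I : Fin k → W → Prop}

def SDSat (D : Set W) (I : Fin k → W → Prop) (cnt : (Fin k → Bool) → ℕ ⊕ ℕ) : Prop :=
  ∀ σ, SatCount (cnt σ) (stateCount D I σ)

lemma msatD_toSDF {cnt : (Fin k → Bool) → ℕ ⊕ ℕ} {a : ℕ → W} :
    MSatD D I a (toSDF cnt) ↔ SDSat D I cnt := by
  simp only [toSDF, msatD_bigAndM, List.forall_mem_map, sigList, Finset.mem_toList,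
    Finset.mem_univ, true_imp_iff, SDSat]
  refine forall_congr' fun σ => ?_
  cases cnt σ <;> simp [SatCount, msatD_exactlyF, msatD_atLeastF]

lemma stateCount_diff_singleton_add_one {d : W} (hd : d ∈ D) :
    stateCount (D \ {d}) I (stateOf I d) + 1 = stateCount D I (stateOf I d) := by
  rw [stateCount, stateCount, ← Set.encard_sdiff_singleton_add_one
    (show d ∈ {w | w ∈ D ∧ stateOf I w = stateOf I d} from ⟨hd, rfl⟩)]
  congr 2
  ext w
  simp [and_right_comm]

lemma stateCount_diff_singleton_of_ne {d : W} {σ : Fin k → Bool} (h : stateOf I d ≠ σ) :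
    stateCount (D \ {d}) I σ = stateCount D I σ := by
  rw [stateCount, stateCount]
  congr 1
  ext w
  simp only [Set.mem_ofPred_eq, Set.mem_sdiff, Set.mem_singleton_iff]
  exact ⟨fun hw => ⟨hw.1.1, hw.2⟩, fun hw => ⟨⟨hw.1, fun hwd => h (hwd ▸ hw.2)⟩, hw.2⟩⟩

lemma sdSat_diff_singleton {d : W} (hd : d ∈ D) {cnt : (Fin k → Bool) → ℕ ⊕ ℕ} :
    SDSat (D \ {d}) I cnt ↔ SDSat D I (bump (stateOf I d) cnt) := by
  refine forall_congr' fun σ => ?_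
  rcases eq_or_ne σ (stateOf I d) with rfl | hσ
  · rw [bump_self, ← stateCount_diff_singleton_add_one hd, satCount_map_succ]
  · rw [bump_of_ne cnt hσ, stateCount_diff_singleton_of_ne hσ.symm]

lemma exists_ne_of_sdSat_bump {σ : Fin k → Bool} {cnt : (Fin k → Bool) → ℕ ⊕ ℕ} {x : W}
    (hx : 1 ≤ (cnt (stateOf I x)).elim id id) (h : SDSat D I (bump σ cnt)) :
    ∃ d ∈ D, stateOf I d = σ ∧ d ≠ x := by
  have hle : (((cnt σ).elim id id : ℕ) : ℕ∞) + 1 ≤ stateCount D I σ := by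
    have := (h σ).le
    rw [bump_self] at this
    revert this
    cases cnt σ <;> simp
  rcases eq_or_ne (stateOf I x) σ with rfl | hσ
  · obtain ⟨d, ⟨hdD, hdσ⟩, hdx⟩ :=
      Set.exists_ne_of_one_lt_encard (lt_of_lt_of_le (by exact_mod_cast Nat.lt_succ_of_le hx) hle) x
    exact ⟨d, hdD, hdσ, hdx⟩
  · obtain ⟨d, hdD, hdσ⟩ := Set.encard_pos.1 (lt_of_lt_of_le (by simp) hle)
    exact ⟨d, hdD, hdσ, fun hdx => hσ (hdx ▸ hdσ)⟩

end GlobalStateDescriptions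

section Removal
variable {k : ℕ} {W : Type} {I : Fin k → W → Prop} {a : ℕ → W}

theorem removal_and_sentence_iff {σ : Fin k → Bool} {SD NF : MF k} (hSD : fv SD = ∅) :
    (∃ d : W, d ≠ a 0 ∧
        MSatD Set.univ I (Function.update a 0 d) (MF.and (sdF σ 0) SD) ∧
        MSatD (Set.univ \ {d}) I a NF) ↔
     (MSatD Set.univ I a SD ∧
      ∃ d : W, d ≠ a 0 ∧ MSatD Set.univ I (Function.update a 0 d) (sdF σ 0) ∧
        MSatD (Set.univ \ {d}) I a NF) := by
  have hSD' (d : W) : MSatD Set.univ I (Function.update a 0 d) SD ↔ MSatD Set.univ I a SD :=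
    msatD_congr (by simp [hSD])
  simp only [msatD_and, hSD']
  grind

theorem removal_state_iff_bump {σi σ' : Fin k → Bool} {cnt : (Fin k → Bool) → ℕ ⊕ ℕ}
    (hcnt : match cnt σ' with | .inl c => 1 ≤ c | .inr c => 1 ≤ c) :
    (∃ d : W, d ≠ a 0 ∧ MSatD Set.univ I (Function.update a 0 d) (sdF σi 0) ∧
        MSatD (Set.univ \ {d}) I a (MF.and (sdF σ' 0) (toSDF cnt))) ↔
     (MSatD Set.univ I a (sdF σ' 0) ∧ MSatD Set.univ I a (toSDF (bump σi cnt))) := by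
  simp only [msatD_and, msatD_sdF, msatD_toSDF, Function.update_self]
  constructor
  · rintro ⟨d, -, rfl, hσ', hSD⟩
    exact ⟨hσ', (sdSat_diff_singleton (Set.mem_univ d)).1 hSD⟩
  · rintro ⟨rfl, hSD⟩
    have hpos : 1 ≤ (cnt (stateOf I (a 0))).elim id id := by
      revert hcnt
      cases cnt (stateOf I (a 0)) <;> simp
    obtain ⟨d, -, rfl, hda⟩ := exists_ne_of_sdSat_bump hpos hSD
    exact ⟨d, hda, rfl, rfl, (sdSat_diff_singleton (Set.mem_univ d)).2 hSD⟩

end Removal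

/-- MFOL₌ is closed under the removal modality, and the two key equivalences:
⟨-(sd ∧ SD)⟩NF ↔ (SD ∧ ⟨-sd⟩NF) for sentences SD, and
⟨-sd_i⟩(sd' ∧ SD) ↔ (sd' ∧ SD[i := i+1]) (for SD consistent with sd'). -/
theorem stmt17 (k : ℕ) :
    (∀ φ ψ : MF k, fv φ ⊆ {0} → fv ψ ⊆ {0} →
      ∃ χ : MF k, fv χ ⊆ {0} ∧
        ∀ (W : Type) (I : Fin k → W → Prop) (a : ℕ → W),
          ((∃ d : W, d ≠ a 0 ∧ MSatD Set.univ I (Function.update a 0 d) φ ∧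
              MSatD (Set.univ \ {d}) I a ψ) ↔ MSatD Set.univ I a χ)) ∧
    (∀ (σ : Fin k → Bool) (SD NF : MF k), fv SD = ∅ → fv NF ⊆ {0} →
      ∀ (W : Type) (I : Fin k → W → Prop) (a : ℕ → W),
        ((∃ d : W, d ≠ a 0 ∧
            MSatD Set.univ I (Function.update a 0 d) (MF.and (sdF σ 0) SD) ∧
            MSatD (Set.univ \ {d}) I a NF) ↔
         (MSatD Set.univ I a SD ∧
          ∃ d : W, d ≠ a 0 ∧ MSatD Set.univ I (Function.update a 0 d) (sdF σ 0) ∧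
            MSatD (Set.univ \ {d}) I a NF))) ∧
    (∀ (σi σ' : Fin k → Bool) (cnt : (Fin k → Bool) → ℕ ⊕ ℕ),
      (match cnt σ' with | .inl c => 1 ≤ c | .inr c => 1 ≤ c) →
      ∀ (W : Type) (I : Fin k → W → Prop) (a : ℕ → W),
        ((∃ d : W, d ≠ a 0 ∧ MSatD Set.univ I (Function.update a 0 d) (sdF σi 0) ∧
            MSatD (Set.univ \ {d}) I a (MF.and (sdF σ' 0) (toSDF cnt))) ↔
         (MSatD Set.univ I a (sdF σ' 0) ∧
          MSatD Set.univ I a (toSDF (bump σi cnt))))) :=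
  ⟨exists_removal_formula,
    fun _ _ _ hSD _ _ _ _ => removal_and_sentence_iff hSD,
    fun _ _ _ hcnt _ _ _ => removal_state_iff_bump hcnt⟩
end

section
/- For a model M with element a and a sentence χ (a point-independent formula): there exists d ≠ a such that M ⊨ (φ(d) ∧ χ) and M-{d} ⊨ ψ(a) if and only if M ⊨ χ and there exists d ≠ a with M ⊨ φ(d) and M-{d} ⊨ ψ(a); that is, ⟨-(φ ∧ χ)⟩ψ ↔ (χ ∧ ⟨-φ⟩ψ) is valid when χ is evaluated globally. -/
/-- Conjunction, defined from ¬ and ∨. -/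
def Form.and (a b : Form) : Form := .neg (.or (.neg a) (.neg b))

/-- If χ is 'global' (its truth does not depend on the evaluation point), then
⟨-(φ ∧ χ)⟩ψ ↔ (χ ∧ ⟨-φ⟩ψ) is valid. -/
theorem stmt18 {W : Type} (M : Model W) (D : Set W) (s : W) (φ χ ψ : Form)
    (hglob : ∀ t t' : W, Sat M χ D t ↔ Sat M χ D t') :
    Sat M (.rem (Form.and φ χ) ψ) D s ↔
      (Sat M χ D s ∧ Sat M (.rem φ ψ) D s) := by
  constructor
  · rintro ⟨t, ht, hts, hφχ, hψ⟩
    simp only [Form.and, Sat, not_or, not_not] at hφχ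
    exact ⟨(hglob t s).mp hφχ.2, t, ht, hts, hφχ.1, hψ⟩
  · rintro ⟨hχ, t, ht, hts, hφ, hψ⟩
    refine ⟨t, ht, hts, ?_, hψ⟩
    simp only [Form.and, Sat, not_or, not_not]
    exact ⟨hφ, (hglob s t).mp hχ⟩
end
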